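/- Fix a nonzero complex number ℏ and complex numbers δ, δ′, c with (1+c)² ≠ δδ′ and (1−c)² ≠ δδ′, set Δ(t) = e^t + e^{−t} − c(e^t − e^{−t}) and D(t) = Δ(t)² − (e^t − e^{−t})²·δδ′, and assume D(s) ≠ 0 for every real s. Let g : ℝ → ℂ be the continuous function with g(s)² = D(s) and g(0) = 2, and define G(t,u,v) = (2/g(t/2))·exp( (1/(iℏ))·((e^{t/2} − e^{−t/2})/D(t/2))·( (e^{t/2} − e^{−t/2})(δ′u² + δv²) + 2Δ(t/2)uv ) ). Then the limit w = lim_{s→−∞} e^{s} g(s) exists and satisfies w² = (1+c)² − δδ′, and, uniformly on compact subsets of ℂ², lim_{t→−∞} e^{−t/2} G(t,u,v) = (2/w)·exp( (1/(iℏ))·(δ′u² − 2(1+c)uv + δv²)/((1+c)² − δδ′) ) and lim_{t→+∞} e^{−t/2} G(t,u,v) = 0. -/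

import Mathlib

/-!
Multiplying by powers of `e^s` turns every quantity into a rational function of `y = e^{2s}`;
for instance `e^{2s} D(s) = ((1 - c) y + (1 + c))² - (y - 1)² δδ'`, which tends to
`(1 + c)² - δδ' ≠ 0` as `s → -∞`. So `(e^s g(s))²` has a nonzero limit, and since `e^s g(s)` is
continuous, a connectedness argument makes `e^s g(s)` itself converge, to a square root `w` of
that limit. Writing `e^{-t/2} G(t, u, v) = a(t) exp(q (k₁(t) (δ'u² + δv²) + k₂(t) uv))`, the
parameters `(a, k₁, k₂)` converge as `t → -∞`, and joint continuity in parameters and `(u, v)`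
gives uniform convergence on compact sets. The case `t → +∞` is the same computation after
`s ↦ -s`, `c ↦ -c`; there the amplitude `a` picks up an extra factor `e^{2s} → 0`.
-/

open Complex Filter Topology

open Metric Set in
theorem tendsto_of_tendsto_sq_of_eventually_mem_ball {α : Type*} {l : Filter α} {f : α → ℂ}
    {ρ : ℂ} (hρ : ρ ≠ 0) (hsq : Tendsto (fun x => f x ^ 2) l (𝓝 (ρ ^ 2)))
    (hball : ∀ᶠ x in l, f x ∈ ball ρ ‖ρ‖) : Tendsto f l (𝓝 ρ) := by
  have hρpos : 0 < ‖ρ‖ := norm_pos_iff.mpr hρ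
  have hbound : ∀ᶠ x in l, ‖f x - ρ‖ ≤ ‖f x ^ 2 - ρ ^ 2‖ / ‖ρ‖ := by
    filter_upwards [hball] with x hx
    rw [mem_ball, dist_eq_norm] at hx
    have hfar : ‖ρ‖ ≤ ‖f x + ρ‖ := by
      have : ‖(2 : ℂ) * ρ‖ ≤ ‖f x + ρ‖ + ‖f x - ρ‖ := by
        rw [show (2 : ℂ) * ρ = (f x + ρ) - (f x - ρ) by ring]
        exact norm_sub_le _ _
      rw [norm_mul, Complex.norm_two] at this
      linarith
    rw [le_div_iff₀ hρpos, show f x ^ 2 - ρ ^ 2 = (f x - ρ) * (f x + ρ) by ring, norm_mul]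
    exact mul_le_mul_of_nonneg_left hfar (norm_nonneg _)
  have hsq0 : Tendsto (fun x => ‖f x ^ 2 - ρ ^ 2‖ / ‖ρ‖) l (𝓝 0) := by
    simpa using (tendsto_iff_norm_sub_tendsto_zero.mp hsq).div_const ‖ρ‖
  exact tendsto_iff_norm_sub_tendsto_zero.mpr
    (squeeze_zero' (Eventually.of_forall fun _ => norm_nonneg _) hbound hsq0)

open Metric Set in
theorem exists_sq_eq_and_tendsto_atBot_of_tendsto_sq {f : ℝ → ℂ} (hf : Continuous f) {L : ℂ}
    (hL : L ≠ 0) (hsq : Tendsto (fun s => f s ^ 2) atBot (𝓝 L)) :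
    ∃ w, w ^ 2 = L ∧ Tendsto f atBot (𝓝 w) := by
  obtain ⟨r, rfl⟩ := IsAlgClosed.exists_pow_nat_eq L two_pos
  have hr : r ≠ 0 := by rintro rfl; simp at hL
  obtain ⟨a, ha⟩ : ∃ a, ∀ s ≤ a, ‖f s ^ 2 - r ^ 2‖ < ‖r‖ ^ 2 := eventually_atBot.mp <|
    (tendsto_iff_norm_sub_tendsto_zero.mp hsq).eventually
      (gt_mem_nhds (by positivity : (0 : ℝ) < ‖r‖ ^ 2))
  -- `‖f - r‖ ‖f + r‖ < ‖r‖²` puts `f s` in one of two disjoint balls, and `f '' Iic a` is connected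
  have hcover : f '' Iic a ⊆ ball r ‖r‖ ∪ ball (-r) ‖r‖ := by
    rintro _ ⟨s, hs, rfl⟩
    by_contra! hout
    simp only [mem_union, mem_ball, dist_eq_norm, sub_neg_eq_add, not_or, not_lt] at hout
    have := ha s hs
    rw [show f s ^ 2 - r ^ 2 = (f s - r) * (f s + r) by ring, norm_mul] at this
    nlinarith [norm_nonneg r]
  have hdisj : Disjoint (ball r ‖r‖) (ball (-r) ‖r‖) := by
    refine ball_disjoint_ball (le_of_eq ?_)
    rw [dist_eq_norm, sub_neg_eq_add, ← two_mul r, norm_mul, Complex.norm_two, two_mul]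
  have hsub := (isPreconnected_Iic.image f hf.continuousOn).subset_or_subset isOpen_ball
    isOpen_ball hdisj hcover
  have hball : ∀ ρ, (∀ s ≤ a, f s ∈ ball ρ ‖ρ‖) → ∀ᶠ s in atBot, f s ∈ ball ρ ‖ρ‖ :=
    fun ρ h => eventually_atBot.mpr ⟨a, h⟩
  rcases hsub with h | h
  · exact ⟨r, rfl, tendsto_of_tendsto_sq_of_eventually_mem_ball hr hsq
      (hball r fun s hs => h (mem_image_of_mem f hs))⟩
  · refine ⟨-r, neg_sq r, tendsto_of_tendsto_sq_of_eventually_mem_ball (neg_ne_zero.mpr hr)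
      (by rwa [neg_sq]) (hball (-r) fun s hs => ?_)⟩
    rw [norm_neg]
    exact h (mem_image_of_mem f hs)

theorem tendstoUniformlyOn_of_continuous_uncurry_of_tendsto {ι X Y Z : Type*}
    [TopologicalSpace X] [TopologicalSpace Y] [UniformSpace Z] {F : X → Y → Z}
    (hF : Continuous (Function.uncurry F)) {l : Filter ι} {k : ι → X} {x₀ : X}
    (hk : Tendsto k l (𝓝 x₀)) {K : Set Y} (hK : IsCompact K) :
    TendstoUniformlyOn (fun i => F (k i)) (F x₀) l K :=
  ContinuousMap.tendsto_iff_forall_isCompact_tendstoUniformlyOn.mp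
    ((ContinuousMap.curry ⟨_, hF⟩).continuous.tendsto x₀ |>.comp hk) K hK

namespace KOrdered

noncomputable def delta (c z : ℂ) : ℂ := exp z + exp (-z) - c * (exp z - exp (-z))

noncomputable def disc (c d z : ℂ) : ℂ := delta c z ^ 2 - (exp z - exp (-z)) ^ 2 * d

def discPoly (c d y : ℂ) : ℂ := ((1 - c) * y + (1 + c)) ^ 2 - (y - 1) ^ 2 * d

theorem delta_neg (c z : ℂ) : delta c (-z) = delta (-c) z := by
  simp only [delta, neg_neg]; ring

theorem disc_neg (c d z : ℂ) : disc c d (-z) = disc (-c) d z := by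
  simp only [disc, delta_neg, neg_neg]; ring

theorem exp_mul_exp_sub_exp_neg (z : ℂ) : exp z * (exp z - exp (-z)) = exp z ^ 2 - 1 := by
  rw [exp_neg, mul_sub, mul_inv_cancel₀ (exp_ne_zero z), sq]

theorem exp_mul_delta (c z : ℂ) : exp z * delta c z = (1 - c) * exp z ^ 2 + (1 + c) := by
  have h := mul_inv_cancel₀ (exp_ne_zero z)
  rw [delta, exp_neg]
  linear_combination (1 + c) * h

theorem exp_sq_mul_disc (c d z : ℂ) : exp z ^ 2 * disc c d z = discPoly c d (exp z ^ 2) := by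
  rw [disc, discPoly, ← exp_mul_delta, ← exp_mul_exp_sub_exp_neg]
  ring

theorem tendsto_exp_sq_atBot : Tendsto (fun s : ℝ => exp (s : ℂ) ^ 2) atBot (𝓝 0) := by
  have h := ((continuous_ofReal.tendsto 0).comp Real.tendsto_exp_atBot).pow 2
  simpa [Function.comp_def, ofReal_exp] using h

theorem tendsto_comp_exp_sq_atBot {F : ℂ → ℂ} (hF : ContinuousAt F 0) :
    Tendsto (fun s : ℝ => F (exp (s : ℂ) ^ 2)) atBot (𝓝 (F 0)) :=
  hF.tendsto.comp tendsto_exp_sq_atBot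

section Limits

variable {c d : ℂ}

theorem discPoly_zero : discPoly c d 0 = (1 + c) ^ 2 - d := by simp [discPoly]

theorem tendsto_exp_sq_mul_disc_atBot :
    Tendsto (fun s : ℝ => exp (s : ℂ) ^ 2 * disc c d s) atBot (𝓝 ((1 + c) ^ 2 - d)) := by
  simp only [exp_sq_mul_disc, ← discPoly_zero (c := c)]
  exact tendsto_comp_exp_sq_atBot (by unfold discPoly; fun_prop)

theorem tendsto_sinh_sq_div_disc_atBot (h : (1 + c) ^ 2 ≠ d) :
    Tendsto (fun s : ℝ => (exp (s : ℂ) - exp (-s)) ^ 2 / disc c d s) atBot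
      (𝓝 (1 / ((1 + c) ^ 2 - d))) := by
  have hP : discPoly c d 0 ≠ 0 := discPoly_zero (c := c) ▸ sub_ne_zero.mpr h
  have key : ∀ s : ℝ, (exp (s : ℂ) - exp (-s)) ^ 2 / disc c d s
      = (exp (s : ℂ) ^ 2 - 1) ^ 2 / discPoly c d (exp (s : ℂ) ^ 2) := fun s => by
    rw [← mul_div_mul_left _ _ (pow_ne_zero 2 (exp_ne_zero (s : ℂ))), ← mul_pow,
      exp_mul_exp_sub_exp_neg, exp_sq_mul_disc]
  simp only [key]
  convert tendsto_comp_exp_sq_atBot (F := fun y => (y - 1) ^ 2 / discPoly c d y)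
    (by unfold discPoly at hP ⊢; fun_prop (disch := exact hP)) using 2
  simp [discPoly_zero]

theorem tendsto_sinh_mul_delta_div_disc_atBot (h : (1 + c) ^ 2 ≠ d) :
    Tendsto (fun s : ℝ => 2 * (exp (s : ℂ) - exp (-s)) * delta c s / disc c d s) atBot
      (𝓝 (-2 * (1 + c) / ((1 + c) ^ 2 - d))) := by
  have hP : discPoly c d 0 ≠ 0 := discPoly_zero (c := c) ▸ sub_ne_zero.mpr h
  have key : ∀ s : ℝ, 2 * (exp (s : ℂ) - exp (-s)) * delta c s / disc c d s
      = 2 * (exp (s : ℂ) ^ 2 - 1) * ((1 - c) * exp (s : ℂ) ^ 2 + (1 + c))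
        / discPoly c d (exp (s : ℂ) ^ 2) := fun s => by
    rw [← mul_div_mul_left _ _ (pow_ne_zero 2 (exp_ne_zero (s : ℂ))), exp_sq_mul_disc,
      ← exp_mul_exp_sub_exp_neg, ← exp_mul_delta]
    ring
  simp only [key]
  convert tendsto_comp_exp_sq_atBot
    (F := fun y => 2 * (y - 1) * ((1 - c) * y + (1 + c)) / discPoly c d y)
    (by unfold discPoly at hP ⊢; fun_prop (disch := exact hP)) using 2
  simp [discPoly_zero]

end Limits

noncomputable def gaussianParams (g : ℝ → ℂ) (c d : ℂ) (s : ℝ) : ℂ × ℂ × ℂ :=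
  (2 * exp (-(s : ℂ)) / g s, (exp (s : ℂ) - exp (-s)) ^ 2 / disc c d s,
    2 * (exp (s : ℂ) - exp (-s)) * delta c s / disc c d s)

noncomputable def gaussian (q δ δ' : ℂ) (x : ℂ × ℂ × ℂ) (p : ℂ × ℂ) : ℂ :=
  x.1 * exp (q * (x.2.1 * (δ' * p.1 ^ 2 + δ * p.2 ^ 2) + x.2.2 * (p.1 * p.2)))

section Params

variable {g : ℝ → ℂ} {c d : ℂ}

theorem exists_tendsto_exp_mul_atBot (hgc : Continuous g) (hg2 : ∀ s : ℝ, g s ^ 2 = disc c d s)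
    (h : (1 + c) ^ 2 ≠ d) :
    ∃ w, w ^ 2 = (1 + c) ^ 2 - d ∧ Tendsto (fun s : ℝ => exp (s : ℂ) * g s) atBot (𝓝 w) :=
  exists_sq_eq_and_tendsto_atBot_of_tendsto_sq (by fun_prop) (sub_ne_zero.mpr h)
    (by simpa only [mul_pow, hg2] using tendsto_exp_sq_mul_disc_atBot)

theorem tendsto_gaussianParams_atBot {w : ℂ}
    (hw : Tendsto (fun s : ℝ => exp (s : ℂ) * g s) atBot (𝓝 w)) (hw0 : w ≠ 0)
    (h : (1 + c) ^ 2 ≠ d) :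
    Tendsto (gaussianParams g c d) atBot
      (𝓝 (2 / w, 1 / ((1 + c) ^ 2 - d), -2 * (1 + c) / ((1 + c) ^ 2 - d))) := by
  have hpre : ∀ s : ℝ, 2 * exp (-(s : ℂ)) / g s = 2 / (exp (s : ℂ) * g s) := fun s => by
    rw [exp_neg]; ring
  refine Tendsto.prodMk_nhds ?_ ((tendsto_sinh_sq_div_disc_atBot h).prodMk_nhds
    (tendsto_sinh_mul_delta_div_disc_atBot h))
  simp only [hpre]
  exact tendsto_const_nhds.div hw hw0

theorem tendsto_gaussianParams_atTop (hgc : Continuous g)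
    (hg2 : ∀ s : ℝ, g s ^ 2 = disc c d s) (h : (1 - c) ^ 2 ≠ d) :
    Tendsto (gaussianParams g c d) atTop
      (𝓝 (0, 1 / ((1 - c) ^ 2 - d), 2 * (1 - c) / ((1 - c) ^ 2 - d))) := by
  have h' : (1 + -c) ^ 2 ≠ d := by rwa [← sub_eq_add_neg]
  obtain ⟨w, hw2, hw⟩ := exists_tendsto_exp_mul_atBot (g := fun s => g (-s)) (by fun_prop)
    (fun s => by rw [hg2, ofReal_neg, disc_neg]) h'
  have hw0 : w ≠ 0 := ne_zero_pow two_ne_zero (hw2 ▸ sub_ne_zero.mpr h')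
  have hneg : ∀ s : ℝ, gaussianParams g c d (-s) = (2 * exp (s : ℂ) ^ 2 / (exp (s : ℂ) * g (-s)),
      (exp (s : ℂ) - exp (-s)) ^ 2 / disc (-c) d s,
      -(2 * (exp (s : ℂ) - exp (-s)) * delta (-c) s / disc (-c) d s)) := fun s => by
    simp only [gaussianParams, ofReal_neg, neg_neg, disc_neg, delta_neg]
    refine Prod.ext ?_ (Prod.ext ?_ ?_) <;> dsimp only
    · rw [show (2 : ℂ) * exp s ^ 2 = exp s * (2 * exp s) by ring,
        mul_div_mul_left _ _ (exp_ne_zero _)]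
    · ring
    · ring
  have hpre : Tendsto (fun s : ℝ => 2 * exp (s : ℂ) ^ 2 / (exp (s : ℂ) * g (-s))) atBot (𝓝 0) := by
    have := (tendsto_exp_sq_atBot.const_mul 2).div hw hw0
    rwa [mul_zero, zero_div] at this
  suffices Tendsto (fun s : ℝ => gaussianParams g c d (-s)) atBot
      (𝓝 (0, 1 / ((1 - c) ^ 2 - d), 2 * (1 - c) / ((1 - c) ^ 2 - d))) by
    simpa [Function.comp_def] using this.comp tendsto_neg_atTop_atBot
  simp only [hneg]
  refine hpre.prodMk_nhds (Tendsto.prodMk_nhds ?_ ?_)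
  · simpa [← sub_eq_add_neg] using tendsto_sinh_sq_div_disc_atBot h'
  · convert (tendsto_sinh_mul_delta_div_disc_atBot h').neg using 2
    ring

end Params

end KOrdered

open KOrdered in
theorem statement4_general (ℏ δ δ' c : ℂ)
    (h1 : (1 + c) ^ 2 ≠ δ * δ') (h2 : (1 - c) ^ 2 ≠ δ * δ')
    (Δ D : ℂ → ℂ)
    (hΔ : ∀ t, Δ t = exp t + exp (-t) - c * (exp t - exp (-t)))
    (hD : ∀ t, D t = (Δ t) ^ 2 - (exp t - exp (-t)) ^ 2 * (δ * δ'))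
    (g : ℝ → ℂ) (hgc : Continuous g) (hg2 : ∀ s : ℝ, (g s) ^ 2 = D s)
    (G : ℝ → ℂ → ℂ → ℂ)
    (hG : ∀ (t : ℝ) (u v : ℂ), G t u v =
      2 / g (t / 2) * exp ((1 / (Complex.I * ℏ)) *
        ((exp ((t : ℂ) / 2) - exp (-(t : ℂ) / 2)) / D ((t : ℂ) / 2)) *
        ((exp ((t : ℂ) / 2) - exp (-(t : ℂ) / 2)) * (δ' * u ^ 2 + δ * v ^ 2)
          + 2 * Δ ((t : ℂ) / 2) * u * v))) :
    ∃ w : ℂ,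
      Tendsto (fun s : ℝ => exp (s : ℂ) * g s) atBot (nhds w) ∧
      w ^ 2 = (1 + c) ^ 2 - δ * δ' ∧
      (∀ Q : Set (ℂ × ℂ), IsCompact Q →
        TendstoUniformlyOn
          (fun (t : ℝ) (p : ℂ × ℂ) => exp (-(t : ℂ) / 2) * G t p.1 p.2)
          (fun p => 2 / w * exp ((1 / (Complex.I * ℏ)) *
            (δ' * p.1 ^ 2 - 2 * (1 + c) * p.1 * p.2 + δ * p.2 ^ 2) /
              ((1 + c) ^ 2 - δ * δ')))
          atBot Q ∧
        TendstoUniformlyOn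
          (fun (t : ℝ) (p : ℂ × ℂ) => exp (-(t : ℂ) / 2) * G t p.1 p.2)
          (fun _ => 0) atTop Q) := by
  obtain rfl : Δ = delta c := funext hΔ
  obtain rfl : D = disc c (δ * δ') := funext hD
  obtain ⟨w, hw2, hw⟩ := exists_tendsto_exp_mul_atBot hgc hg2 h1
  have hw0 : w ≠ 0 := ne_zero_pow two_ne_zero (hw2 ▸ sub_ne_zero.mpr h1)
  have hfamily : (fun (t : ℝ) (p : ℂ × ℂ) => exp (-(t : ℂ) / 2) * G t p.1 p.2)
      = fun t => gaussian (1 / (I * ℏ)) δ δ' (gaussianParams g c (δ * δ') (t / 2)) := by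
    funext t p
    rw [hG, gaussian, gaussianParams]
    push_cast
    rw [neg_div]
    ring_nf
  have hcont : Continuous (Function.uncurry (gaussian (1 / (I * ℏ)) δ δ')) := by
    unfold gaussian; fun_prop
  refine ⟨w, hw, hw2, fun Q hQ => ⟨?_, ?_⟩⟩ <;> rw [hfamily]
  · refine (tendstoUniformlyOn_of_continuous_uncurry_of_tendsto hcont
      ((tendsto_gaussianParams_atBot hw hw0 h1).comp (tendsto_id.atBot_div_const two_pos))
      hQ).congr_right fun p _ => ?_
    simp only [gaussian]
    ring_nf
  · refine (tendstoUniformlyOn_of_continuous_uncurry_of_tendsto hcont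
      ((tendsto_gaussianParams_atTop hgc hg2 h2).comp (tendsto_id.atTop_div_const two_pos))
      hQ).congr_right fun p _ => ?_
    simp [gaussian]

/-- With `K = [[δ,c],[c,δ']]`, `(1±c)² ≠ δδ'`, `D` nonvanishing on ℝ, `g` the continuous
square root of `D` on ℝ with `g 0 = 2`, and `G(t,·,·)` the `K`-ordered expression of
`e_∗^{t(1/(iℏ))u∘v}`: the limit `w = lim_{s→−∞} e^s g(s)` exists, `w² = (1+c)² − δδ'`, and,
uniformly on compact subsets of ℂ², `e^{−t/2}G(t,u,v)` (the `K`-ordered expression of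
`e_∗^{t(1/(iℏ))u∗v}`) converges as `t → −∞` to the vacuum
`(2/w)·exp((1/(iℏ))(δ'u² − 2(1+c)uv + δv²)/((1+c)² − δδ'))`, and to `0` as `t → +∞`. -/
theorem statement4 (ℏ δ δ' c : ℂ) (hℏ : ℏ ≠ 0)
    (h1 : (1 + c) ^ 2 ≠ δ * δ') (h2 : (1 - c) ^ 2 ≠ δ * δ')
    (Δ D : ℂ → ℂ)
    (hΔ : ∀ t, Δ t = exp t + exp (-t) - c * (exp t - exp (-t)))
    (hD : ∀ t, D t = (Δ t) ^ 2 - (exp t - exp (-t)) ^ 2 * (δ * δ'))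
    (hDR : ∀ s : ℝ, D s ≠ 0)
    (g : ℝ → ℂ) (hgc : Continuous g) (hg2 : ∀ s : ℝ, (g s) ^ 2 = D s) (hg0 : g 0 = 2)
    (G : ℝ → ℂ → ℂ → ℂ)
    (hG : ∀ (t : ℝ) (u v : ℂ), G t u v =
      2 / g (t / 2) * exp ((1 / (Complex.I * ℏ)) *
        ((exp ((t : ℂ) / 2) - exp (-(t : ℂ) / 2)) / D ((t : ℂ) / 2)) *
        ((exp ((t : ℂ) / 2) - exp (-(t : ℂ) / 2)) * (δ' * u ^ 2 + δ * v ^ 2)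
          + 2 * Δ ((t : ℂ) / 2) * u * v))) :
    ∃ w : ℂ,
      Tendsto (fun s : ℝ => exp (s : ℂ) * g s) atBot (nhds w) ∧
      w ^ 2 = (1 + c) ^ 2 - δ * δ' ∧
      (∀ Q : Set (ℂ × ℂ), IsCompact Q →
        TendstoUniformlyOn
          (fun (t : ℝ) (p : ℂ × ℂ) => exp (-(t : ℂ) / 2) * G t p.1 p.2)
          (fun p => 2 / w * exp ((1 / (Complex.I * ℏ)) *
            (δ' * p.1 ^ 2 - 2 * (1 + c) * p.1 * p.2 + δ * p.2 ^ 2) /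
              ((1 + c) ^ 2 - δ * δ')))
          atBot Q ∧
        TendstoUniformlyOn
          (fun (t : ℝ) (p : ℂ × ℂ) => exp (-(t : ℂ) / 2) * G t p.1 p.2)
          (fun _ => 0) atTop Q) :=
  statement4_general ℏ δ δ' c h1 h2 Δ D hΔ hD g hgc hg2 G hG
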